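/- arXiv:2410.09446 — 2 statements merged into one kernel-verified Lean document; each statement's English description precedes it below -/
import Mathlib

section
/- Let T be a bounded, linear, positive operator on L²(G, ℂ^{s×r}) that is adjointable with respect to the matrix-valued inner product, and let W be a bounded, linear, positive operator on L²(G, ℂ^{s×r}) with W ∘ W = T (i.e., W is the positive square root T^{1/2} of T). Then W is adjointable with respect to the matrix-valued inner product: ⟨W f, g⟩ = ⟨f, W* g⟩ as s×s matrices for all f, g ∈ L²(G, ℂ^{s×r}). -/
open MeasureTheory Filter
open scoped ENNReal ComplexOrder

noncomputable section

/-- The space `L²(G, ℂ^{s×r})` of square-integrable `ℂ^{s×r}`-valued functions on `G`,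
realized as an `Lp`-space with values in `EuclideanSpace ℂ (Fin s × Fin r)`
(so that the norm is the Frobenius norm). -/
abbrev MatL2 {G : Type*} [MeasurableSpace G] (μ : Measure G) (s r : ℕ) : Type _ :=
  Lp (α := G) (EuclideanSpace ℂ (Fin s × Fin r)) 2 μ

/-- The matrix-valued inner product `⟨f, g⟩ = ∫_G f(x) g(x)* dμ(x)`, an `s × s` matrix. -/
def matInner {G : Type*} [MeasurableSpace G] {μ : Measure G} {s r : ℕ}
    (f g : MatL2 μ s r) : Matrix (Fin s) (Fin s) ℂ :=
  Matrix.of fun i j => ∫ x, ∑ n : Fin r, f x (i, n) * (starRingEnd ℂ) (g x (j, n)) ∂μ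

/-- Left multiplication by the matrix `A : ℂ^{s×s}` as a continuous linear map on
`ℂ^{s×r} ≅ EuclideanSpace ℂ (Fin s × Fin r)`; it is given by the matrix `A ⊗ I`. -/
def matMulCLM (s r : ℕ) (A : Matrix (Fin s) (Fin s) ℂ) :
    EuclideanSpace ℂ (Fin s × Fin r) →L[ℂ] EuclideanSpace ℂ (Fin s × Fin r) :=
  LinearMap.toContinuousLinearMap
    (Matrix.toEuclideanLin (Matrix.of fun p q : Fin s × Fin r =>
      if p.2 = q.2 then A p.1 q.1 else 0))

/-- The action of a matrix `A : ℂ^{s×s}` on `h ∈ L²(G, ℂ^{s×r})` by pointwise left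
multiplication, `(A h)(x) = A · h(x)`. -/
def matSMul {G : Type*} [MeasurableSpace G] {μ : Measure G} {s r : ℕ}
    (A : Matrix (Fin s) (Fin s) ℂ) (f : MatL2 μ s r) : MatL2 μ s r :=
  (matMulCLM s r A).compLp f

/-- A bounded linear operator `U` on `L²(G, ℂ^{s×r})` is adjointable with respect to the
matrix-valued inner product if `⟨U f, g⟩ = ⟨f, U* g⟩` (as `s × s` matrices) for all `f, g`,
where `U*` is the Hilbert adjoint of `U`. -/
def MatAdjointable {G : Type*} [MeasurableSpace G] {μ : Measure G} {s r : ℕ}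
    (U : MatL2 μ s r →L[ℂ] MatL2 μ s r) : Prop :=
  ∀ f g : MatL2 μ s r,
    matInner (U f) g = matInner f (ContinuousLinearMap.adjoint U g)

/-- A matrix-valued orthonormal basis of `L²(G, ℂ^{s×r})`: `⟨E k, E j⟩ = δ_{kj} I` and
every `f` has the expansion `f = ∑_k ⟨f, E k⟩ E k`, the series converging in norm. -/
def IsMatONB {G : Type*} [MeasurableSpace G] {μ : Measure G} {s r : ℕ}
    (E : ℕ → MatL2 μ s r) : Prop :=
  (∀ k j : ℕ, matInner (E k) (E j) =
      if k = j then (1 : Matrix (Fin s) (Fin s) ℂ) else (0 : Matrix (Fin s) (Fin s) ℂ)) ∧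
  (∀ f : MatL2 μ s r,
    Tendsto (fun N : ℕ => ∑ k ∈ Finset.range N, matSMul (matInner f (E k)) (E k))
      atTop (nhds f))

/-- A matrix-valued Riesz basis of `L²(G, ℂ^{s×r})`: the image of a matrix-valued
orthonormal basis under a bounded, linear, bijective operator that is adjointable with
respect to the matrix-valued inner product. -/
def IsMatRieszBasis {G : Type*} [MeasurableSpace G] {μ : Measure G} {s r : ℕ}
    (F : ℕ → MatL2 μ s r) : Prop :=
  ∃ (E : ℕ → MatL2 μ s r) (V : MatL2 μ s r →L[ℂ] MatL2 μ s r),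
    IsMatONB E ∧ Function.Bijective V ∧ MatAdjointable V ∧ ∀ k : ℕ, F k = V (E k)

/-- The Frobenius norm of an `s × s` complex matrix. -/
def frobNorm {s : ℕ} (A : Matrix (Fin s) (Fin s) ℂ) : ℝ :=
  Real.sqrt (∑ i : Fin s, ∑ j : Fin s, ‖A i j‖ ^ 2)

end

/-
The `(i, j)` entry of the matrix inner product `⟨f, g⟩` is the scalar inner product of `E_{ij} g`
with `f`, where `E_{ij}` is the matrix unit acting by pointwise left multiplication. Hence `U`
is adjointable exactly when `U*` commutes with every `E_{ij}`. For `T = W²` with `W ≥ 0` we have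
`T* = T` and `W = √T`, and anything commuting with `T` commutes with its continuous functional
calculus, in particular with `√T = W = W*`.
-/

section MatAdjointable

open ContinuousLinearMap (adjoint adjoint_inner_left)

variable {G : Type*} [MeasurableSpace G] (μ : Measure G) {s r : ℕ}

noncomputable def matSMulL (A : Matrix (Fin s) (Fin s) ℂ) : MatL2 μ s r →L[ℂ] MatL2 μ s r :=
  (matMulCLM s r A).compLpL 2 μ

variable {μ}

lemma matMulCLM_apply (A : Matrix (Fin s) (Fin s) ℂ)
    (v : EuclideanSpace ℂ (Fin s × Fin r)) (p : Fin s × Fin r) :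
    matMulCLM s r A v p = ∑ b : Fin s, A p.1 b * v (b, p.2) := by
  simp [matMulCLM, Matrix.toLpLin_apply, Matrix.mulVec, dotProduct, Fintype.sum_prod_type]

lemma matInner_apply_eq_inner (f g : MatL2 μ s r) (i j : Fin s) :
    matInner f g i j = inner ℂ (matSMulL μ (Matrix.single i j 1) g) f := by
  rw [L2.inner_def]
  refine integral_congr_ae ?_
  filter_upwards [(matMulCLM s r (Matrix.single i j 1)).coeFn_compLpL (p := 2) (μ := μ) g]
    with x hx
  simp only [matSMulL, hx, PiLp.inner_apply, Fintype.sum_prod_type, matMulCLM_apply,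
    RCLike.inner_apply]
  rw [Finset.sum_comm]
  refine Finset.sum_congr rfl fun n _ => ?_
  simp [Matrix.single_apply, ite_and, apply_ite (starRingEnd ℂ), mul_ite]

theorem matAdjointable_iff_commute_adjoint (U : MatL2 μ s r →L[ℂ] MatL2 μ s r) :
    MatAdjointable U ↔
      ∀ i j : Fin s, Commute (matSMulL μ (Matrix.single i j 1)) (adjoint U) := by
  have entry_eq (f g : MatL2 μ s r) (i j : Fin s) :
      matInner (U f) g i j = matInner f (adjoint U g) i j ↔
        inner ℂ (adjoint U (matSMulL μ (Matrix.single i j 1) g)) f =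
          inner ℂ (matSMulL μ (Matrix.single i j 1) (adjoint U g)) f := by
    rw [matInner_apply_eq_inner, matInner_apply_eq_inner, adjoint_inner_left]
  simp only [MatAdjointable, ← Matrix.ext_iff, entry_eq, commute_iff_eq,
    ContinuousLinearMap.ext_iff, mul_apply_eq_comp]
  constructor
  · exact fun h i j g => (ext_inner_right ℂ fun f => h f g i j).symm
  · exact fun h f g i j => by rw [h]

end MatAdjointable

theorem Commute.of_mul_self_of_nonneg {A : Type*} [CStarAlgebra A] [PartialOrder A]
    [StarOrderedRing A] {a b : A} (ha : 0 ≤ a) (hb : Commute b (a * a)) : Commute b a := by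
  rw [← CFC.sqrt_unique rfl ha, CFC.sqrt_eq_cfc]
  exact (hb.symm.cfc_nnreal _).symm

theorem stmt_9_general {G : Type*} [MeasurableSpace G]
    (μ : MeasureTheory.Measure G) (s r : ℕ)
    (T W : MatL2 μ s r →L[ℂ] MatL2 μ s r)
    (hTadj : MatAdjointable T)
    (hWpos : W.IsPositive) (hWT : W.comp W = T) :
    MatAdjointable W := by
  have hW : IsSelfAdjoint W := hWpos.isSelfAdjoint
  have hT : IsSelfAdjoint T := by
    rw [← hWT, IsSelfAdjoint, ← ContinuousLinearMap.mul_def, star_mul, hW.star_eq]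
  rw [matAdjointable_iff_commute_adjoint, ← ContinuousLinearMap.star_eq_adjoint] at hTadj ⊢
  intro i j
  rw [hW.star_eq]
  refine .of_mul_self_of_nonneg ((ContinuousLinearMap.nonneg_iff_isPositive W).mpr hWpos) ?_
  rw [ContinuousLinearMap.mul_def, hWT, ← hT.star_eq]
  exact hTadj i j

theorem stmt_9 {G : Type*} [MeasurableSpace G] [TopologicalSpace G] [BorelSpace G]
    [AddCommGroup G] [IsTopologicalAddGroup G] [LocallyCompactSpace G]
    [SigmaCompactSpace G] [TopologicalSpace.MetrizableSpace G]
    (μ : MeasureTheory.Measure G) [μ.IsAddHaarMeasure] (s r : ℕ) (hs : 0 < s) (hr : 0 < r)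
    (T W : MatL2 μ s r →L[ℂ] MatL2 μ s r)
    (hTpos : T.IsPositive) (hTadj : MatAdjointable T)
    (hWpos : W.IsPositive) (hWT : W.comp W = T) :
    MatAdjointable W :=
  stmt_9_general μ s r T W hTadj hWpos hWT
end

section
/- Let T be a bounded, linear, self-adjoint operator on L²(G, ℂ^{s×r}) (self-adjoint with respect to ⟨·,·⟩_{L²}) that is adjointable with respect to the matrix-valued inner product, let Q be the positive square root of T², i.e., a bounded, linear, positive operator with Q ∘ Q = T ∘ T, and let {E_k}_{k∈ℕ} be a matrix-valued orthonormal basis for L²(G, ℂ^{s×r}). Then both {(I + ½(Q + T)) E_k}_{k∈ℕ} and {(I + ½(Q − T)) E_k}_{k∈ℕ} are matrix-valued Riesz bases for L²(G, ℂ^{s×r}), where I denotes the identity operator. -/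
open MeasureTheory Filter
open scoped ENNReal ComplexOrder

/-! Being the positive square root of `T²`, `Q` is the absolute value `|T|`, so
`(Q + T)/2 = T⁺` and `(Q - T)/2 = T⁻`; both operators `I + T^±` are at least `I`, hence
invertible. The operators adjointable for the matrix-valued inner product form a norm-closed
`⋆`-subalgebra, because the defining identity is continuous in the operator; a closed
`⋆`-subalgebra containing `T` contains every continuous function of `T`, so it contains `T^±`. -/

open ContinuousLinearMap
open scoped InnerProductSpace Matrix

section CStarAlgebra

variable {A : Type*} [CStarAlgebra A]

lemma StarSubalgebra.posPart_mem {S : StarSubalgebra ℂ A} (hS : IsClosed (S : Set A)) {a : A}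
    (ha : a ∈ S) : a⁺ ∈ S := by
  rw [CFC.posPart_def, cfcₙ_eq_cfc]
  exact cfc_mem (𝕜' := ℂ) (hs := hS) _ ha

variable [PartialOrder A] [StarOrderedRing A]

lemma CFC.eq_abs_of_mul_self_eq {a b : A} (ha : IsSelfAdjoint a) (hb : 0 ≤ b)
    (h : b * b = a * a) : b = CFC.abs a := by
  rw [CFC.abs, ha.star_eq, CFC.sqrt_unique h hb]

lemma isUnit_one_add_of_nonneg {a : A} (ha : 0 ≤ a) : IsUnit (1 + a) :=
  (isStrictlyPositive_one.add_nonneg ha).isUnit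

lemma inv_two_smul_add_eq_posPart {a b : A} (ha : IsSelfAdjoint a) (hb : 0 ≤ b)
    (h : b * b = a * a) : (2⁻¹ : ℂ) • (b + a) = a⁺ := by
  rw [CFC.eq_abs_of_mul_self_eq ha hb h, CFC.abs_add_self a ha, ← Nat.cast_smul_eq_nsmul ℂ,
    smul_smul]
  norm_num

lemma isUnit_one_add_inv_two_smul_add {a b : A} (ha : IsSelfAdjoint a) (hb : 0 ≤ b)
    (h : b * b = a * a) : IsUnit (1 + (2⁻¹ : ℂ) • (b + a)) := by
  rw [inv_two_smul_add_eq_posPart ha hb h]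
  exact isUnit_one_add_of_nonneg (CFC.posPart_nonneg a)

lemma StarSubalgebra.one_add_inv_two_smul_add_mem {S : StarSubalgebra ℂ A}
    (hS : IsClosed (S : Set A)) {a b : A} (ha : IsSelfAdjoint a) (haS : a ∈ S) (hb : 0 ≤ b)
    (h : b * b = a * a) : 1 + (2⁻¹ : ℂ) • (b + a) ∈ S := by
  rw [inv_two_smul_add_eq_posPart ha hb h]
  exact add_mem (one_mem S) (posPart_mem hS haS)

end CStarAlgebra

section MatrixInner

variable {G : Type*} [MeasurableSpace G] {μ : Measure G} {s r : ℕ}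

noncomputable def rowCLM (s r : ℕ) (i : Fin s) :
    EuclideanSpace ℂ (Fin s × Fin r) →L[ℂ] EuclideanSpace ℂ (Fin r) :=
  LinearMap.toContinuousLinearMap
    { toFun := fun v => WithLp.toLp 2 fun n => v (i, n)
      map_add' := fun _ _ => rfl
      map_smul' := fun _ _ => rfl }

variable (μ) in
noncomputable def rowL2 (s r : ℕ) (i : Fin s) :
    MatL2 μ s r →L[ℂ] Lp (EuclideanSpace ℂ (Fin r)) 2 μ :=
  (rowCLM s r i).compLpL 2 μ

lemma matInner_apply (f g : MatL2 μ s r) (i j : Fin s) :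
    matInner f g i j = ⟪rowL2 μ s r j g, rowL2 μ s r i f⟫_ℂ := by
  rw [L2.inner_def]
  refine integral_congr_ae ?_
  filter_upwards [(rowCLM s r j).coeFn_compLpL g, (rowCLM s r i).coeFn_compLpL f]
    with x hg hf
  simp only [rowL2, hg, hf, PiLp.inner_apply, RCLike.inner_apply]
  rfl

lemma Continuous.matInner {X : Type*} [TopologicalSpace X] {f g : X → MatL2 μ s r}
    (hf : Continuous f) (hg : Continuous g) : Continuous fun x => matInner (f x) (g x) :=
  continuous_pi fun i => continuous_pi fun j => by
    simp only [matInner_apply]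
    fun_prop

lemma conjTranspose_matInner (f g : MatL2 μ s r) : (matInner f g)ᴴ = matInner g f := by
  ext i j
  simp [matInner_apply]

lemma matInner_add_left (f f' g : MatL2 μ s r) :
    matInner (f + f') g = matInner f g + matInner f' g := by
  ext i j
  simp [matInner_apply, inner_add_right]

lemma matInner_add_right (f g g' : MatL2 μ s r) :
    matInner f (g + g') = matInner f g + matInner f g' := by
  ext i j
  simp [matInner_apply, inner_add_left]

lemma matInner_smul_left (c : ℂ) (f g : MatL2 μ s r) :
    matInner (c • f) g = c • matInner f g := by
  ext i j
  simp [matInner_apply, inner_smul_right]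

lemma matInner_smul_right (c : ℂ) (f g : MatL2 μ s r) :
    matInner f (c • g) = star c • matInner f g := by
  ext i j
  simp [matInner_apply, inner_smul_left]

end MatrixInner

section MatAdjointable

variable {G : Type*} [MeasurableSpace G] {μ : Measure G} {s r : ℕ}

lemma MatAdjointable.one : MatAdjointable (1 : MatL2 μ s r →L[ℂ] MatL2 μ s r) := by
  intro f g
  rw [← star_eq_adjoint, star_one, one_apply_eq_self, one_apply_eq_self]

lemma MatAdjointable.smul {U : MatL2 μ s r →L[ℂ] MatL2 μ s r} (hU : MatAdjointable U)
    (c : ℂ) : MatAdjointable (c • U) := by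
  intro f g
  rw [← star_eq_adjoint, star_smul, star_eq_adjoint, smul_apply, smul_apply,
    matInner_smul_left, matInner_smul_right, star_star, hU]

lemma MatAdjointable.add {U V : MatL2 μ s r →L[ℂ] MatL2 μ s r} (hU : MatAdjointable U)
    (hV : MatAdjointable V) : MatAdjointable (U + V) := by
  intro f g
  rw [map_add, add_apply, add_apply, matInner_add_left, matInner_add_right, hU, hV]

lemma MatAdjointable.mul {U V : MatL2 μ s r →L[ℂ] MatL2 μ s r} (hU : MatAdjointable U)
    (hV : MatAdjointable V) : MatAdjointable (U * V) := by
  intro f g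
  rw [← star_eq_adjoint, star_mul, star_eq_adjoint, star_eq_adjoint, mul_apply_eq_comp,
    mul_apply_eq_comp, hU, hV]

lemma MatAdjointable.star {U : MatL2 μ s r →L[ℂ] MatL2 μ s r} (hU : MatAdjointable U) :
    MatAdjointable (star U) := by
  intro f g
  rw [star_eq_adjoint, adjoint_adjoint, ← conjTranspose_matInner, ← hU,
    conjTranspose_matInner]

lemma isClosed_setOf_matAdjointable :
    IsClosed {U : MatL2 μ s r →L[ℂ] MatL2 μ s r | MatAdjointable U} := by
  simp only [MatAdjointable, Set.ofPred_forall]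
  refine isClosed_iInter fun f => isClosed_iInter fun g => isClosed_eq ?_ ?_
  · exact (continuous_id.clm_apply continuous_const).matInner continuous_const
  · exact continuous_const.matInner (adjoint.continuous.clm_apply continuous_const)

variable (μ s r) in
def matAdjointableSubalgebra : StarSubalgebra ℂ (MatL2 μ s r →L[ℂ] MatL2 μ s r) where
  carrier := {U | MatAdjointable U}
  mul_mem' := MatAdjointable.mul
  add_mem' := MatAdjointable.add
  algebraMap_mem' c := by
    rw [Set.mem_ofPred_eq, Algebra.algebraMap_eq_smul_one]
    exact MatAdjointable.one.smul c
  star_mem' := MatAdjointable.star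

end MatAdjointable

lemma IsMatONB.isMatRieszBasis_map {G : Type*} [MeasurableSpace G] {μ : Measure G} {s r : ℕ}
    {E : ℕ → MatL2 μ s r} (hE : IsMatONB E) {V : MatL2 μ s r →L[ℂ] MatL2 μ s r}
    (hV : IsUnit V) (hVadj : MatAdjointable V) : IsMatRieszBasis fun k => V (E k) :=
  ⟨E, V, hE, isUnit_iff_bijective.mp hV, hVadj, fun _ => rfl⟩

theorem stmt_15_general {G : Type*} [MeasurableSpace G]
    (μ : MeasureTheory.Measure G) (s r : ℕ)
    (T Q : MatL2 μ s r →L[ℂ] MatL2 μ s r)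
    (hTsa : IsSelfAdjoint T) (hTadj : MatAdjointable T)
    (hQpos : Q.IsPositive) (hQ : Q.comp Q = T.comp T)
    (E : ℕ → MatL2 μ s r) (hE : IsMatONB E) :
    IsMatRieszBasis (fun k => (1 + (2⁻¹ : ℂ) • (Q + T)) (E k)) ∧
      IsMatRieszBasis (fun k => (1 + (2⁻¹ : ℂ) • (Q - T)) (E k)) := by
  have hQ0 : 0 ≤ Q := Q.nonneg_iff_isPositive.mpr hQpos
  have hQT : Q * Q = T * T := hQ
  have hQnegT : Q * Q = -T * -T := by rw [neg_mul_neg, hQT]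
  have hS := isClosed_setOf_matAdjointable (μ := μ) (s := s) (r := r)
  have hTS : T ∈ matAdjointableSubalgebra μ s r := hTadj
  rw [sub_eq_add_neg]
  exact ⟨hE.isMatRieszBasis_map (isUnit_one_add_inv_two_smul_add hTsa hQ0 hQT)
      (StarSubalgebra.one_add_inv_two_smul_add_mem hS hTsa hTS hQ0 hQT),
    hE.isMatRieszBasis_map (isUnit_one_add_inv_two_smul_add hTsa.neg hQ0 hQnegT)
      (StarSubalgebra.one_add_inv_two_smul_add_mem hS hTsa.neg (neg_mem hTS) hQ0 hQnegT)⟩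

theorem stmt_15 {G : Type*} [MeasurableSpace G] [TopologicalSpace G] [BorelSpace G]
    [AddCommGroup G] [IsTopologicalAddGroup G] [LocallyCompactSpace G]
    [SigmaCompactSpace G] [TopologicalSpace.MetrizableSpace G]
    (μ : MeasureTheory.Measure G) [μ.IsAddHaarMeasure] (s r : ℕ) (hs : 0 < s) (hr : 0 < r)
    (T Q : MatL2 μ s r →L[ℂ] MatL2 μ s r)
    (hTsa : IsSelfAdjoint T) (hTadj : MatAdjointable T)
    (hQpos : Q.IsPositive) (hQ : Q.comp Q = T.comp T)
    (E : ℕ → MatL2 μ s r) (hE : IsMatONB E) :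
    IsMatRieszBasis (fun k => (1 + (2⁻¹ : ℂ) • (Q + T)) (E k)) ∧
      IsMatRieszBasis (fun k => (1 + (2⁻¹ : ℂ) • (Q - T)) (E k)) :=
  stmt_15_general μ s r T Q hTsa hTadj hQpos hQ E hE
end
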